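/- Assume additionally: H is a real Hilbert space; Σ_{k∈V} ω(k) K(k,m) = 1 for every m ∈ V; Σ_{m∈V} ω(m) K(k,m) = 1 for every k ∈ V; Σ_{m∈V} ω(m) = 1; and λ ∈ [0,1) satisfies ‖A_m x‖ ≤ λ‖x‖ for all m ∈ V and x ∈ H. Let μ_n denote the law of the RSI chain after n steps from the RSI initial distribution built from ψ⁰, let φ^{(n)} be the source-iteration iterates with φ^{(0)}_m = Σ_{k∈V} ω(k) K(k,m) • ψ⁰(k), and set V₀ = Σ_{m∈V} ω(m) E_{(v,Φ)∼μ₀} ‖Φ_m − φ^{(0)}_m‖². Suppose M ≥ 0 is such that for every n ≥ 0 and every m ∈ V: E_{(v,Φ)∼μ_n}[ (1/2) Σ_{g=1}^G Σ_{k,k'∈V_g} ‖ √(p^v(k')/p^v(k)) · ω(k) K(k,m) • (A_k Φ_k + b_k) − √(p^v(k)/p^v(k')) · ω(k') K(k',m) • (A_{k'} Φ_{k'} + b_{k'}) ‖² ] ≤ M. Then for every n ≥ 0: Σ_{m∈V} ω(m) E_{(v,Φ)∼μ_n} ‖Φ_m − φ^{(n)}_m‖² ≤ λ^{2n} V₀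 + ((1 − λ^{2n})/(1 − λ²)) · M. -/

import Mathlib

open Finset

namespace RSI11

variable {V : Type*} [Fintype V] [DecidableEq V] {G : ℕ}
variable {H : Type*} [NormedAddCommGroup H] [InnerProductSpace ℝ H] [CompleteSpace H]

/-- Selections: one ordinate chosen from each group. -/
abbrev Sel (grp : V → Fin G) := {v : Fin G → V // ∀ g, grp (v g) = g}

/-- `c^v(m) = Σ_g ω(v(g)) K(v(g), m)`. -/
def cf (grp : V → Fin G) (ω : V → ℝ) (K : V → V → ℝ) (v : Sel grp) (m : V) : ℝ :=
  ∑ g, ω (v.1 g) * K (v.1 g) m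

/-- RSI selection probability `p^v(m)`. -/
noncomputable def pf (grp : V → Fin G) (ω : V → ℝ) (K : V → V → ℝ) (v : Sel grp) (m : V) : ℝ :=
  ω m * cf grp ω K v m /
    ∑ m' ∈ univ.filter (fun m' => grp m' = grp m), ω m' * cf grp ω K v m'

/-- One deterministic step of the RSI chain given the newly drawn selection `v'`. -/
noncomputable def step (grp : V → Fin G) (ω : V → ℝ) (K : V → V → ℝ)
    (A : V → H →L[ℝ] H) (b : V → H)
    (s : Sel grp × (V → H)) (v' : Sel grp) : Sel grp × (V → H) :=
  (v', fun m => ∑ g, (ω (v'.1 g) * K (v'.1 g) m / pf grp ω K s.1 (v'.1 g)) •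
      (A (v'.1 g) (s.2 (v'.1 g)) + b (v'.1 g)))

/-- Expectation of a real-valued observable of the RSI chain after `n` steps,
started from the state `s` (a finite sum, since the law has finite support). -/
noncomputable def expsR (grp : V → Fin G) (ω : V → ℝ) (K : V → V → ℝ)
    (A : V → H →L[ℝ] H) (b : V → H) :
    ℕ → ((Sel grp × (V → H)) → ℝ) → (Sel grp × (V → H)) → ℝ
  | 0, f, s => f s
  | n + 1, f, s => ∑ v' : Sel grp,
      (∏ g, pf grp ω K s.1 (v'.1 g)) * expsR grp ω K A b n f (step grp ω K A b s v')

/-- Cardinality `|V_g|` of group `g`. -/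
def gcard (grp : V → Fin G) (g : Fin G) : ℕ := (univ.filter fun k => grp k = g).card

/-- Expectation of a real-valued observable under the law `μ_n` of the RSI
chain after `n` steps, started from the RSI initial distribution built
from `ψ0`. -/
noncomputable def En (grp : V → Fin G) (ω : V → ℝ) (K : V → V → ℝ)
    (A : V → H →L[ℝ] H) (b : V → H) (ψ0 : V → H)
    (n : ℕ) (f : (Sel grp × (V → H)) → ℝ) : ℝ :=
  ∑ v0 : Sel grp,
    (∏ g, ((gcard grp g : ℝ))⁻¹) *
      expsR grp ω K A b n f
        (v0, fun m' => ∑ g,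
          ((gcard grp g : ℝ) * (ω (v0.1 g) * K (v0.1 g) m')) • ψ0 (v0.1 g))

/-- Source iteration: `φ^{(n)}_m = Σ_k ω k K k m • (A_k φ^{(n-1)}_k + b_k)`. -/
noncomputable def phiSI (ω : V → ℝ) (K : V → V → ℝ)
    (A : V → H →L[ℝ] H) (b : V → H) (φ0 : V → H) : ℕ → V → H
  | 0 => φ0
  | n + 1 => fun m => ∑ k, (ω k * K k m) • (A k (phiSI ω K A b φ0 n k) + b k)


section Lemmas
set_option linter.unusedSectionVars false
set_option linter.unusedVariables false

variable {grp : V → Fin G} {ω : V → ℝ} {K : V → V → ℝ}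

lemma sum_sel_prod (f : Fin G → V → ℝ) :
    ∑ v : Sel grp, ∏ g, f g (v.1 g)
      = ∏ g, ∑ k ∈ univ.filter (fun k => grp k = g), f g k := by
  rw [Finset.prod_univ_sum]
  refine (Finset.sum_subtype (Fintype.piFinset fun g => univ.filter fun k => grp k = g)
    ?_ fun x => ∏ g, f g (x g)).symm
  intro x
  simp [Fintype.mem_piFinset]

lemma cf_pos [Nonempty (Fin G)] (hω : ∀ k, 0 < ω k) (hK : ∀ k m, 0 < K k m)
    (v : Sel grp) (m : V) : 0 < cf grp ω K v m :=
  Finset.sum_pos (fun g _ => mul_pos (hω _) (hK _ _)) univ_nonempty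

lemma pf_pos [Nonempty (Fin G)] (hω : ∀ k, 0 < ω k) (hK : ∀ k m, 0 < K k m)
    (v : Sel grp) (k : V) : 0 < pf grp ω K v k := by
  apply div_pos (mul_pos (hω k) (cf_pos hω hK v k))
  exact Finset.sum_pos (fun m' _ => mul_pos (hω _) (cf_pos hω hK v m'))
    ⟨k, by simp⟩

lemma pf_sum_group [Nonempty (Fin G)] (hω : ∀ k, 0 < ω k) (hK : ∀ k m, 0 < K k m)
    (v : Sel grp) (g : Fin G) (hg : ∃ k, grp k = g) :
    ∑ k ∈ univ.filter (fun k => grp k = g), pf grp ω K v k = 1 := by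
  obtain ⟨k0, hk0⟩ := hg
  have hD : 0 < ∑ m' ∈ univ.filter (fun m' => grp m' = g), ω m' * cf grp ω K v m' :=
    Finset.sum_pos (fun m' _ => mul_pos (hω _) (cf_pos hω hK v m'))
      ⟨k0, by simp [hk0]⟩
  have hcongr : ∀ k ∈ univ.filter (fun k => grp k = g),
      pf grp ω K v k = ω k * cf grp ω K v k /
        ∑ m' ∈ univ.filter (fun m' => grp m' = g), ω m' * cf grp ω K v m' := by
    intro k hk
    have : grp k = g := (Finset.mem_filter.mp hk).2
    simp only [pf, this]
  rw [Finset.sum_congr rfl hcongr, ← Finset.sum_div, div_self hD.ne']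


lemma sel_mass (p : V → ℝ)
    (hps : ∀ g : Fin G, ∑ k ∈ univ.filter (fun k => grp k = g), p k = 1) :
    ∑ v : Sel grp, (∏ g, p (v.1 g)) = 1 := by
  rw [sum_sel_prod (fun _ k => p k)]
  simp [hps]

lemma sel_single (p : V → ℝ)
    (hps : ∀ g : Fin G, ∑ k ∈ univ.filter (fun k => grp k = g), p k = 1)
    (r : V → ℝ) (g0 : Fin G) :
    ∑ v : Sel grp, (∏ g, p (v.1 g)) * r (v.1 g0)
      = ∑ k ∈ univ.filter (fun k => grp k = g0), p k * r k := by
  have h1 : ∀ v : Sel grp, (∏ g, p (v.1 g)) * r (v.1 g0)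
      = ∏ g, (p (v.1 g) * (if g = g0 then r (v.1 g) else 1)) := by
    intro v
    rw [Finset.prod_mul_distrib, Finset.prod_ite_eq']
    simp
  rw [Finset.sum_congr rfl (fun v _ => h1 v),
    sum_sel_prod (fun g k => p k * (if g = g0 then r k else 1))]
  have h2 : ∀ g : Fin G, ∑ k ∈ univ.filter (fun k => grp k = g),
      (p k * (if g = g0 then r k else 1))
      = if g = g0 then (∑ k ∈ univ.filter (fun k => grp k = g0), p k * r k) else 1 := by
    intro g
    by_cases hg : g = g0
    · subst hg; simp
    · simp [hg, hps g]
  rw [Finset.prod_congr rfl (fun g _ => h2 g), Finset.prod_ite_eq']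
  simp

lemma sel_pair (p : V → ℝ)
    (hps : ∀ g : Fin G, ∑ k ∈ univ.filter (fun k => grp k = g), p k = 1)
    (r u : V → ℝ) (g0 g1 : Fin G) (hne : g0 ≠ g1) :
    ∑ v : Sel grp, (∏ g, p (v.1 g)) * (r (v.1 g0) * u (v.1 g1))
      = (∑ k ∈ univ.filter (fun k => grp k = g0), p k * r k)
        * (∑ k ∈ univ.filter (fun k => grp k = g1), p k * u k) := by
  have h1 : ∀ v : Sel grp, (∏ g, p (v.1 g)) * (r (v.1 g0) * u (v.1 g1))
      = ∏ g, (p (v.1 g) * ((if g = g0 then r (v.1 g) else 1)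
          * (if g = g1 then u (v.1 g) else 1))) := by
    intro v
    simp only [Finset.prod_mul_distrib, Finset.prod_ite_eq']
    simp
  rw [Finset.sum_congr rfl (fun v _ => h1 v),
    sum_sel_prod (fun g k => p k * ((if g = g0 then r k else 1) * (if g = g1 then u k else 1)))]
  have h2 : ∀ g : Fin G, ∑ k ∈ univ.filter (fun k => grp k = g),
      (p k * ((if g = g0 then r k else 1) * (if g = g1 then u k else 1)))
      = (if g = g0 then (∑ k ∈ univ.filter (fun k => grp k = g0), p k * r k) else 1)
        * (if g = g1 then (∑ k ∈ univ.filter (fun k => grp k = g1), p k * u k) else 1) := by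
    intro g
    by_cases hg0 : g = g0
    · subst hg0
      simp [hne]
    · by_cases hg1 : g = g1
      · subst hg1; simp [hg0]
      · simp [hg0, hg1, hps g]
  rw [Finset.prod_congr rfl (fun g _ => h2 g), Finset.prod_mul_distrib,
    Finset.prod_ite_eq', Finset.prod_ite_eq']
  simp

lemma sel_two (p : V → ℝ)
    (hps : ∀ g : Fin G, ∑ k ∈ univ.filter (fun k => grp k = g), p k = 1)
    (F : V → V → ℝ) (g0 g1 : Fin G) (hne : g0 ≠ g1) :
    ∑ v : Sel grp, (∏ g, p (v.1 g)) * F (v.1 g0) (v.1 g1)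
      = ∑ k ∈ univ.filter (fun k => grp k = g0),
          ∑ k' ∈ univ.filter (fun k' => grp k' = g1), (p k * p k') * F k k' := by
  have key : ∀ v : Sel grp, F (v.1 g0) (v.1 g1)
      = ∑ k ∈ univ.filter (fun k => grp k = g0),
          ∑ k' ∈ univ.filter (fun k' => grp k' = g1),
            ((if v.1 g0 = k then (1:ℝ) else 0) * (if v.1 g1 = k' then 1 else 0)) * F k k' := by
    intro v
    have hv0 : v.1 g0 ∈ univ.filter (fun k => grp k = g0) := by simp [v.2 g0]
    have hv1 : v.1 g1 ∈ univ.filter (fun k' => grp k' = g1) := by simp [v.2 g1]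
    rw [Finset.sum_eq_single_of_mem (v.1 g0) hv0 ?side0]
    case side0 =>
      intro k _ hk
      exact Finset.sum_eq_zero fun k' _ => by simp [if_neg (Ne.symm hk)]
    rw [Finset.sum_eq_single_of_mem (v.1 g1) hv1 ?side1]
    case side1 =>
      intro k' _ hk'
      simp [if_neg (Ne.symm hk')]
    simp
  calc ∑ v : Sel grp, (∏ g, p (v.1 g)) * F (v.1 g0) (v.1 g1)
      = ∑ v : Sel grp, ∑ k ∈ univ.filter (fun k => grp k = g0),
          ∑ k' ∈ univ.filter (fun k' => grp k' = g1),
            (∏ g, p (v.1 g)) * (((if v.1 g0 = k then (1:ℝ) else 0)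
              * (if v.1 g1 = k' then 1 else 0)) * F k k') := by
        refine Finset.sum_congr rfl fun v _ => ?_
        rw [key v, Finset.mul_sum]
        exact Finset.sum_congr rfl fun k _ => by rw [Finset.mul_sum]
    _ = ∑ k ∈ univ.filter (fun k => grp k = g0),
          ∑ k' ∈ univ.filter (fun k' => grp k' = g1),
            ∑ v : Sel grp, (∏ g, p (v.1 g)) * (((if v.1 g0 = k then (1:ℝ) else 0)
              * (if v.1 g1 = k' then 1 else 0)) * F k k') := by
        rw [Finset.sum_comm]
        exact Finset.sum_congr rfl fun k _ => Finset.sum_comm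
    _ = ∑ k ∈ univ.filter (fun k => grp k = g0),
          ∑ k' ∈ univ.filter (fun k' => grp k' = g1), (p k * p k') * F k k' := by
        refine Finset.sum_congr rfl fun k hk => Finset.sum_congr rfl fun k' hk' => ?_
        have h3 : ∀ v : Sel grp, (∏ g, p (v.1 g)) * (((if v.1 g0 = k then (1:ℝ) else 0)
              * (if v.1 g1 = k' then 1 else 0)) * F k k')
            = ((∏ g, p (v.1 g)) * ((if v.1 g0 = k then (1:ℝ) else 0)
              * (if v.1 g1 = k' then 1 else 0))) * F k k' := by
          intro v; ring
        rw [Finset.sum_congr rfl (fun v _ => h3 v), ← Finset.sum_mul]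
        have hsum := sel_pair p hps (fun j => if j = k then (1:ℝ) else 0)
          (fun j => if j = k' then (1:ℝ) else 0) g0 g1 hne
        have e0 : ∑ j ∈ univ.filter (fun j => grp j = g0),
            p j * (if j = k then (1:ℝ) else 0) = p k := by
          rw [Finset.sum_congr rfl (fun j _ => by rw [mul_ite, mul_one, mul_zero]),
            Finset.sum_ite_eq' _ k p, if_pos hk]
        have e1 : ∑ j ∈ univ.filter (fun j => grp j = g1),
            p j * (if j = k' then (1:ℝ) else 0) = p k' := by
          rw [Finset.sum_congr rfl (fun j _ => by rw [mul_ite, mul_one, mul_zero]),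
            Finset.sum_ite_eq' _ k' p, if_pos hk']
        calc (∑ v : Sel grp, (∏ g, p (v.1 g)) * ((if v.1 g0 = k then (1:ℝ) else 0)
              * (if v.1 g1 = k' then 1 else 0))) * F k k'
            = ((∑ j ∈ univ.filter (fun j => grp j = g0), p j * (if j = k then (1:ℝ) else 0))
              * (∑ j ∈ univ.filter (fun j => grp j = g1), p j * (if j = k' then (1:ℝ) else 0)))
                * F k k' := congrArg (· * F k k') hsum
          _ = (p k * p k') * F k k' := by rw [e0, e1]


lemma exp_split {α : Type*} [Fintype α] (P A B : α → ℝ) (c2 : ℝ) :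
    ∑ v, P v * (A v - 2 * B v + c2)
      = (∑ v, P v * A v) - 2 * (∑ v, P v * B v) + (∑ v, P v) * c2 := by
  have h : ∀ v, P v * (A v - 2 * B v + c2)
      = P v * A v - 2 * (P v * B v) + P v * c2 := fun v => by ring
  rw [Finset.sum_congr rfl (fun v _ => h v), Finset.sum_add_distrib,
    Finset.sum_sub_distrib, ← Finset.mul_sum, ← Finset.sum_mul]

lemma exp_swap1 {α : Type*} [Fintype α] (P : α → ℝ) (F : α → Fin G → ℝ) :
    ∑ v, P v * (∑ g, F v g) = ∑ g, ∑ v, P v * F v g := by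
  simp only [Finset.mul_sum]
  exact Finset.sum_comm

lemma exp_swap2 {α : Type*} [Fintype α] (P : α → ℝ) (F : α → Fin G → Fin G → ℝ) :
    ∑ v, P v * (∑ g, ∑ h, F v g h) = ∑ g, ∑ h, ∑ v, P v * F v g h := by
  simp only [Finset.mul_sum]
  rw [Finset.sum_comm]
  exact Finset.sum_congr rfl fun g _ => Finset.sum_comm

lemma sel_expect_norm_sq (p : V → ℝ)
    (hps : ∀ g : Fin G, ∑ k ∈ univ.filter (fun k => grp k = g), p k = 1)
    (y : V → H) (c : H) :
    ∑ v : Sel grp, (∏ g, p (v.1 g)) * ‖(∑ g, y (v.1 g)) - c‖ ^ 2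
      = (∑ g : Fin G,
          ((∑ k ∈ univ.filter (fun k => grp k = g), p k * ‖y k‖ ^ 2)
            - ‖∑ k ∈ univ.filter (fun k => grp k = g), p k • y k‖ ^ 2))
        + ‖(∑ g : Fin G, ∑ k ∈ univ.filter (fun k => grp k = g), p k • y k) - c‖ ^ 2 := by
  classical
  have expand : ∀ v : Sel grp, ‖(∑ g, y (v.1 g)) - c‖ ^ 2
      = (∑ g : Fin G, ∑ h : Fin G, (inner ℝ (y (v.1 g)) (y (v.1 h)) : ℝ))
        - 2 * (∑ g : Fin G, (inner ℝ (y (v.1 g)) c : ℝ)) + ‖c‖ ^ 2 := by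
    intro v
    rw [norm_sub_sq_real, ← real_inner_self_eq_norm_sq (∑ g, y (v.1 g)),
      sum_inner, sum_inner]
    simp only [inner_sum]
  have hgh : ∀ g h : Fin G,
      ∑ v : Sel grp, (∏ g', p (v.1 g')) * (inner ℝ (y (v.1 g)) (y (v.1 h)) : ℝ)
        = (inner ℝ (∑ k ∈ univ.filter (fun k => grp k = g), p k • y k)
            (∑ k ∈ univ.filter (fun k => grp k = h), p k • y k) : ℝ)
          + (if g = h then
              (∑ k ∈ univ.filter (fun k => grp k = g), p k * ‖y k‖ ^ 2)
                - ‖∑ k ∈ univ.filter (fun k => grp k = g), p k • y k‖ ^ 2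
            else 0) := by
    intro g h
    by_cases hgh' : g = h
    · subst hgh'
      calc ∑ v : Sel grp, (∏ g', p (v.1 g')) * (inner ℝ (y (v.1 g)) (y (v.1 g)) : ℝ)
          = ∑ k ∈ univ.filter (fun k => grp k = g), p k * (inner ℝ (y k) (y k) : ℝ) :=
            sel_single p hps (fun k => (inner ℝ (y k) (y k) : ℝ)) g
        _ = ∑ k ∈ univ.filter (fun k => grp k = g), p k * ‖y k‖ ^ 2 :=
            Finset.sum_congr rfl fun k _ => by rw [real_inner_self_eq_norm_sq]
        _ = _ := by
            rw [real_inner_self_eq_norm_sq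
              (∑ k ∈ univ.filter (fun k => grp k = g), p k • y k), if_pos rfl]
            ring
    · calc ∑ v : Sel grp, (∏ g', p (v.1 g')) * (inner ℝ (y (v.1 g)) (y (v.1 h)) : ℝ)
          = ∑ k ∈ univ.filter (fun k => grp k = g),
              ∑ k' ∈ univ.filter (fun k' => grp k' = h),
                (p k * p k') * (inner ℝ (y k) (y k') : ℝ) :=
            sel_two p hps (fun k k' => (inner ℝ (y k) (y k') : ℝ)) g h hgh'
        _ = _ := by
            rw [if_neg hgh', add_zero, sum_inner]
            refine Finset.sum_congr rfl fun k _ => ?_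
            rw [inner_sum]
            refine Finset.sum_congr rfl fun k' _ => ?_
            rw [real_inner_smul_left, real_inner_smul_right]
            ring
  calc ∑ v : Sel grp, (∏ g, p (v.1 g)) * ‖(∑ g, y (v.1 g)) - c‖ ^ 2
      = ∑ v : Sel grp, (∏ g, p (v.1 g)) *
          ((∑ g : Fin G, ∑ h : Fin G, (inner ℝ (y (v.1 g)) (y (v.1 h)) : ℝ))
            - 2 * (∑ g : Fin G, (inner ℝ (y (v.1 g)) c : ℝ)) + ‖c‖ ^ 2) :=
        Finset.sum_congr rfl fun v _ => by rw [expand v]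
    _ = (∑ v : Sel grp, (∏ g, p (v.1 g)) *
            (∑ g : Fin G, ∑ h : Fin G, (inner ℝ (y (v.1 g)) (y (v.1 h)) : ℝ)))
          - 2 * (∑ v : Sel grp, (∏ g, p (v.1 g)) *
            (∑ g : Fin G, (inner ℝ (y (v.1 g)) c : ℝ)))
          + (∑ v : Sel grp, (∏ g, p (v.1 g))) * ‖c‖ ^ 2 :=
        exp_split _ _ _ _
    _ = (∑ g : Fin G, ∑ h : Fin G, ∑ v : Sel grp,
            (∏ g', p (v.1 g')) * (inner ℝ (y (v.1 g)) (y (v.1 h)) : ℝ))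
          - 2 * (∑ g : Fin G, ∑ v : Sel grp,
            (∏ g', p (v.1 g')) * (inner ℝ (y (v.1 g)) c : ℝ))
          + 1 * ‖c‖ ^ 2 := by
        rw [sel_mass p hps]
        rw [show (∑ v : Sel grp, (∏ g, p (v.1 g)) *
            (∑ g : Fin G, ∑ h : Fin G, (inner ℝ (y (v.1 g)) (y (v.1 h)) : ℝ)))
          = ∑ g : Fin G, ∑ h : Fin G, ∑ v : Sel grp,
            (∏ g', p (v.1 g')) * (inner ℝ (y (v.1 g)) (y (v.1 h)) : ℝ) from exp_swap2 _ _]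
        rw [show (∑ v : Sel grp, (∏ g, p (v.1 g)) *
            (∑ g : Fin G, (inner ℝ (y (v.1 g)) c : ℝ)))
          = ∑ g : Fin G, ∑ v : Sel grp,
            (∏ g', p (v.1 g')) * (inner ℝ (y (v.1 g)) c : ℝ) from exp_swap1 _ _]
    _ = (∑ g : Fin G, ∑ h : Fin G,
            ((inner ℝ (∑ k ∈ univ.filter (fun k => grp k = g), p k • y k)
              (∑ k ∈ univ.filter (fun k => grp k = h), p k • y k) : ℝ)
            + (if g = h then
                (∑ k ∈ univ.filter (fun k => grp k = g), p k * ‖y k‖ ^ 2)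
                  - ‖∑ k ∈ univ.filter (fun k => grp k = g), p k • y k‖ ^ 2
              else 0)))
          - 2 * (∑ g : Fin G, ∑ k ∈ univ.filter (fun k => grp k = g),
              p k * (inner ℝ (y k) c : ℝ))
          + 1 * ‖c‖ ^ 2 := by
        rw [Finset.sum_congr rfl fun g _ => Finset.sum_congr rfl fun h _ => hgh g h]
        rw [Finset.sum_congr rfl fun g _ =>
          sel_single p hps (fun k => (inner ℝ (y k) c : ℝ)) g]
    _ = _ := by
        have hdiag : ∀ g : Fin G,
            (∑ h : Fin G, if g = h then (∑ k ∈ univ.filter (fun k => grp k = g), p k * ‖y k‖ ^ 2) - ‖∑ k ∈ univ.filter (fun k => grp k = g), p k • y k‖ ^ 2 else 0)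
              = (∑ k ∈ univ.filter (fun k => grp k = g), p k * ‖y k‖ ^ 2) - ‖∑ k ∈ univ.filter (fun k => grp k = g), p k • y k‖ ^ 2 := fun g => by
          rw [Finset.sum_ite_eq]; simp
        have hmu2 : (∑ g : Fin G, ∑ h : Fin G,
            (inner ℝ (∑ k ∈ univ.filter (fun k => grp k = g), p k • y k) (∑ k ∈ univ.filter (fun k => grp k = h), p k • y k) : ℝ))
              = ‖∑ g : Fin G, ∑ k ∈ univ.filter (fun k => grp k = g), p k • y k‖ ^ 2 := by
          rw [← real_inner_self_eq_norm_sq (∑ g : Fin G, ∑ k ∈ univ.filter (fun k => grp k = g), p k • y k), sum_inner]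
          exact Finset.sum_congr rfl fun g _ => by rw [inner_sum]
        have hbc : (∑ g : Fin G, ∑ k ∈ univ.filter (fun k => grp k = g),
            p k * (inner ℝ (y k) c : ℝ)) = (inner ℝ (∑ g : Fin G, ∑ k ∈ univ.filter (fun k => grp k = g), p k • y k) c : ℝ) := by
          rw [sum_inner]
          exact Finset.sum_congr rfl fun g _ => by
            rw [sum_inner]
            exact Finset.sum_congr rfl fun k _ => (real_inner_smul_left _ _ _).symm
        rw [Finset.sum_congr rfl fun (g : Fin G) _ => Finset.sum_add_distrib,
          Finset.sum_add_distrib,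
          Finset.sum_congr rfl fun (g : Fin G) _ => hdiag g, hmu2, hbc,
          norm_sub_sq_real]
        ring


lemma symm_var (t : Finset V) (p : V → ℝ) (hp : ∀ k ∈ t, 0 < p k)
    (hps : ∑ k ∈ t, p k = 1) (a : V → H) :
    (1 / 2) * ∑ k ∈ t, ∑ k' ∈ t,
        ‖Real.sqrt (p k' / p k) • a k - Real.sqrt (p k / p k') • a k'‖ ^ 2
      = (∑ k ∈ t, ‖a k‖ ^ 2 / p k) - ‖∑ k ∈ t, a k‖ ^ 2 := by
  have hsmul : ∀ (x : ℝ), 0 ≤ x → ∀ z : H, ‖Real.sqrt x • z‖ ^ 2 = x * ‖z‖ ^ 2 := by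
    intro x hx z
    rw [norm_smul, mul_pow, Real.norm_eq_abs, sq_abs, Real.sq_sqrt hx]
  have key : ∀ k ∈ t, ∀ k' ∈ t,
      ‖Real.sqrt (p k' / p k) • a k - Real.sqrt (p k / p k') • a k'‖ ^ 2
        = (p k' / p k) * ‖a k‖ ^ 2 + (p k / p k') * ‖a k'‖ ^ 2
          - 2 * (inner ℝ (a k) (a k') : ℝ) := by
    intro k hk k' hk'
    rw [norm_sub_sq_real, hsmul _ (div_nonneg (hp k' hk').le (hp k hk).le),
      hsmul _ (div_nonneg (hp k hk).le (hp k' hk').le),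
      real_inner_smul_left, real_inner_smul_right]
    have h1 : p k' / p k * (p k / p k') = 1 := by
      rw [div_mul_div_comm, mul_comm (p k') (p k)]
      exact div_self (mul_pos (hp k hk) (hp k' hk')).ne'
    have h2 : Real.sqrt (p k' / p k) * Real.sqrt (p k / p k') = 1 := by
      rw [← Real.sqrt_mul (div_nonneg (hp k' hk').le (hp k hk).le), h1, Real.sqrt_one]
    have h3 : Real.sqrt (p k' / p k) * (Real.sqrt (p k / p k')
        * (inner ℝ (a k) (a k') : ℝ)) = (inner ℝ (a k) (a k') : ℝ) := by
      rw [← mul_assoc, h2, one_mul]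
    linear_combination (-2 : ℝ) * h3
  rw [Finset.sum_congr rfl fun k hk => Finset.sum_congr rfl fun k' hk' =>
    key k hk k' hk']
  have hS1 : ∑ k ∈ t, ∑ k' ∈ t, (p k' / p k) * ‖a k‖ ^ 2
      = ∑ k ∈ t, ‖a k‖ ^ 2 / p k := by
    refine Finset.sum_congr rfl fun k hk => ?_
    rw [Finset.sum_congr rfl fun k' _ =>
      (show (p k' / p k) * ‖a k‖ ^ 2 = p k' * (‖a k‖ ^ 2 / p k) by ring),
      ← Finset.sum_mul, hps, one_mul]
  have hS2 : ∑ k ∈ t, ∑ k' ∈ t, (p k / p k') * ‖a k'‖ ^ 2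
      = ∑ k ∈ t, ‖a k‖ ^ 2 / p k := by
    rw [Finset.sum_comm]
    refine Finset.sum_congr rfl fun k hk => ?_
    rw [Finset.sum_congr rfl fun k' _ =>
      (show (p k' / p k) * ‖a k‖ ^ 2 = p k' * (‖a k‖ ^ 2 / p k) by ring),
      ← Finset.sum_mul, hps, one_mul]
  have hSI : ∑ k ∈ t, ∑ k' ∈ t, (inner ℝ (a k) (a k') : ℝ) = ‖∑ k ∈ t, a k‖ ^ 2 := by
    rw [← real_inner_self_eq_norm_sq (∑ k ∈ t, a k), sum_inner]
    exact Finset.sum_congr rfl fun k _ => by rw [inner_sum]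
  have split : ∑ k ∈ t, ∑ k' ∈ t,
      ((p k' / p k) * ‖a k‖ ^ 2 + (p k / p k') * ‖a k'‖ ^ 2
        - 2 * (inner ℝ (a k) (a k') : ℝ))
      = (∑ k ∈ t, ∑ k' ∈ t, (p k' / p k) * ‖a k‖ ^ 2)
        + (∑ k ∈ t, ∑ k' ∈ t, (p k / p k') * ‖a k'‖ ^ 2)
        - 2 * (∑ k ∈ t, ∑ k' ∈ t, (inner ℝ (a k) (a k') : ℝ)) := by
    simp only [Finset.sum_add_distrib, Finset.sum_sub_distrib, ← Finset.mul_sum]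
  rw [split, hS1, hS2, hSI]
  ring

lemma jensen_norm_sq {ι : Type*} (t : Finset ι) (w : ι → ℝ) (hw : ∀ i ∈ t, 0 ≤ w i)
    (hw1 : ∑ i ∈ t, w i = 1) (z : ι → H) :
    ‖∑ i ∈ t, w i • z i‖ ^ 2 ≤ ∑ i ∈ t, w i * ‖z i‖ ^ 2 := by
  have h1 : ‖∑ i ∈ t, w i • z i‖ ≤ ∑ i ∈ t, w i * ‖z i‖ := by
    refine (norm_sum_le _ _).trans (le_of_eq (Finset.sum_congr rfl fun i hi => ?_))
    rw [norm_smul, Real.norm_of_nonneg (hw i hi)]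
  have h2 : ‖∑ i ∈ t, w i • z i‖ ^ 2 ≤ (∑ i ∈ t, w i * ‖z i‖) ^ 2 := by
    have := pow_le_pow_left₀ (norm_nonneg _) h1 2
    exact this
  refine h2.trans ?_
  have h3 : ∀ i ∈ t, w i * ‖z i‖ = Real.sqrt (w i) * (Real.sqrt (w i) * ‖z i‖) := by
    intro i hi
    rw [← mul_assoc, Real.mul_self_sqrt (hw i hi)]
  rw [Finset.sum_congr rfl h3]
  refine (Finset.sum_mul_sq_le_sq_mul_sq t (fun i => Real.sqrt (w i))
    (fun i => Real.sqrt (w i) * ‖z i‖)).trans (le_of_eq ?_)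
  have h4 : ∀ i ∈ t, Real.sqrt (w i) ^ 2 = w i := fun i hi => Real.sq_sqrt (hw i hi)
  rw [Finset.sum_congr rfl h4, hw1, one_mul]
  refine Finset.sum_congr rfl fun i hi => ?_
  rw [mul_pow, Real.sq_sqrt (hw i hi)]


variable {A : V → H →L[ℝ] H} {b : V → H}

lemma expsR_succ_last (n : ℕ) (f : (Sel grp × (V → H)) → ℝ) (s : Sel grp × (V → H)) :
    expsR grp ω K A b (n + 1) f s
      = expsR grp ω K A b n (fun s' => ∑ v' : Sel grp,
          (∏ g, pf grp ω K s'.1 (v'.1 g)) * f (step grp ω K A b s' v')) s := by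
  induction n generalizing s with
  | zero => rfl
  | succ n ih =>
    show ∑ v' : Sel grp, _ = ∑ v' : Sel grp, _
    exact Finset.sum_congr rfl fun v' _ => by rw [ih]

lemma expsR_fsum {ι : Type*} (t : Finset ι) (n : ℕ)
    (f : ι → (Sel grp × (V → H)) → ℝ) (s : Sel grp × (V → H)) :
    expsR grp ω K A b n (fun s' => ∑ i ∈ t, f i s') s
      = ∑ i ∈ t, expsR grp ω K A b n (f i) s := by
  induction n generalizing s with
  | zero => rfl
  | succ n ih =>
    simp only [expsR]
    rw [Finset.sum_congr rfl fun (v' : Sel grp) _ => by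
      rw [ih (step grp ω K A b s v'), Finset.mul_sum]]
    exact Finset.sum_comm

lemma expsR_smul (c : ℝ) (n : ℕ) (f : (Sel grp × (V → H)) → ℝ) (s : Sel grp × (V → H)) :
    expsR grp ω K A b n (fun s' => c * f s') s = c * expsR grp ω K A b n f s := by
  induction n generalizing s with
  | zero => rfl
  | succ n ih =>
    simp only [expsR]
    rw [Finset.mul_sum]
    exact Finset.sum_congr rfl fun v' _ => by rw [ih]; ring

lemma expsR_add (n : ℕ) (f f' : (Sel grp × (V → H)) → ℝ) (s : Sel grp × (V → H)) :
    expsR grp ω K A b n (fun s' => f s' + f' s') s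
      = expsR grp ω K A b n f s + expsR grp ω K A b n f' s := by
  induction n generalizing s with
  | zero => rfl
  | succ n ih =>
    simp only [expsR]
    rw [← Finset.sum_add_distrib]
    exact Finset.sum_congr rfl fun v' _ => by rw [ih]; ring

lemma expsR_mono [Nonempty (Fin G)] (hω : ∀ k, 0 < ω k) (hK : ∀ k m, 0 < K k m)
    (n : ℕ) {f f' : (Sel grp × (V → H)) → ℝ} (h : ∀ s', f s' ≤ f' s')
    (s : Sel grp × (V → H)) :
    expsR grp ω K A b n f s ≤ expsR grp ω K A b n f' s := by
  induction n generalizing s with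
  | zero => exact h s
  | succ n ih =>
    simp only [expsR]
    refine Finset.sum_le_sum fun v' _ => ?_
    exact mul_le_mul_of_nonneg_left (ih _)
      (Finset.prod_nonneg fun g _ => (pf_pos hω hK _ _).le)

lemma expsR_const [Nonempty (Fin G)] (hω : ∀ k, 0 < ω k) (hK : ∀ k m, 0 < K k m)
    (hgrp : ∀ g : Fin G, ∃ k, grp k = g)
    (c : ℝ) (n : ℕ) (s : Sel grp × (V → H)) :
    expsR grp ω K A b n (fun _ => c) s = c := by
  induction n generalizing s with
  | zero => rfl
  | succ n ih =>
    simp only [expsR]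
    rw [Finset.sum_congr rfl fun (v' : Sel grp) _ => by
      rw [ih (step grp ω K A b s v')]]
    rw [← Finset.sum_mul, sel_mass (pf grp ω K s.1)
      (fun g => pf_sum_group hω hK s.1 g (hgrp g)), one_mul]

variable {ψ0 : V → H}

lemma gcard_pos (hgrp : ∀ g : Fin G, ∃ k, grp k = g) (g : Fin G) :
    0 < gcard grp g := by
  obtain ⟨k, hk⟩ := hgrp g
  exact Finset.card_pos.mpr ⟨k, by simp [hk]⟩

lemma En_fsum {ι : Type*} (t : Finset ι) (n : ℕ)
    (f : ι → (Sel grp × (V → H)) → ℝ) :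
    En grp ω K A b ψ0 n (fun s' => ∑ i ∈ t, f i s')
      = ∑ i ∈ t, En grp ω K A b ψ0 n (f i) := by
  unfold En
  rw [Finset.sum_comm]
  exact Finset.sum_congr rfl fun v0 _ => by rw [expsR_fsum, Finset.mul_sum]

lemma En_smul (c : ℝ) (n : ℕ) (f : (Sel grp × (V → H)) → ℝ) :
    En grp ω K A b ψ0 n (fun s' => c * f s') = c * En grp ω K A b ψ0 n f := by
  unfold En
  rw [Finset.mul_sum]
  exact Finset.sum_congr rfl fun v0 _ => by rw [expsR_smul]; ring

lemma En_add (n : ℕ) (f f' : (Sel grp × (V → H)) → ℝ) :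
    En grp ω K A b ψ0 n (fun s' => f s' + f' s')
      = En grp ω K A b ψ0 n f + En grp ω K A b ψ0 n f' := by
  unfold En
  rw [← Finset.sum_add_distrib]
  exact Finset.sum_congr rfl fun v0 _ => by rw [expsR_add]; ring

lemma En_mono [Nonempty (Fin G)] (hω : ∀ k, 0 < ω k) (hK : ∀ k m, 0 < K k m)
    (n : ℕ) {f f' : (Sel grp × (V → H)) → ℝ} (h : ∀ s', f s' ≤ f' s') :
    En grp ω K A b ψ0 n f ≤ En grp ω K A b ψ0 n f' := by
  unfold En
  refine Finset.sum_le_sum fun v0 _ => ?_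
  exact mul_le_mul_of_nonneg_left (expsR_mono hω hK n h _)
    (Finset.prod_nonneg fun g _ => by positivity)

lemma En_succ (n : ℕ) (f : (Sel grp × (V → H)) → ℝ) :
    En grp ω K A b ψ0 (n + 1) f
      = En grp ω K A b ψ0 n (fun s' => ∑ v' : Sel grp,
          (∏ g, pf grp ω K s'.1 (v'.1 g)) * f (step grp ω K A b s' v')) := by
  unfold En
  exact Finset.sum_congr rfl fun v0 _ => by rw [expsR_succ_last]


lemma step_expect [Nonempty (Fin G)] (hω : ∀ k, 0 < ω k) (hK : ∀ k m, 0 < K k m)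
    (hgrp : ∀ g : Fin G, ∃ k, grp k = g)
    (s : Sel grp × (V → H)) (m : V) (c : H) :
    ∑ v' : Sel grp, (∏ g, pf grp ω K s.1 (v'.1 g)) *
        ‖(step grp ω K A b s v').2 m - c‖ ^ 2
      = ((1 / 2) * ∑ g : Fin G,
          ∑ k ∈ univ.filter (fun k => grp k = g),
            ∑ k' ∈ univ.filter (fun k' => grp k' = g),
              ‖(Real.sqrt (pf grp ω K s.1 k' / pf grp ω K s.1 k) *
                  (ω k * K k m)) • (A k (s.2 k) + b k)
                - (Real.sqrt (pf grp ω K s.1 k / pf grp ω K s.1 k') *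
                  (ω k' * K k' m)) • (A k' (s.2 k') + b k')‖ ^ 2)
        + ‖(∑ k, (ω k * K k m) • (A k (s.2 k) + b k)) - c‖ ^ 2 := by
  classical
  set p : V → ℝ := pf grp ω K s.1 with hp
  have hppos : ∀ k, 0 < p k := fun k => pf_pos hω hK _ k
  have hps : ∀ g : Fin G, ∑ k ∈ univ.filter (fun k => grp k = g), p k = 1 :=
    fun g => pf_sum_group hω hK s.1 g (hgrp g)
  set ψ : V → H := fun k => A k (s.2 k) + b k with hψ
  set y : V → H := fun k => (ω k * K k m / p k) • ψ k with hy
  set a : V → H := fun k => (ω k * K k m) • ψ k with ha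
  have hstep : ∀ v' : Sel grp, (step grp ω K A b s v').2 m = ∑ g, y (v'.1 g) := by
    intro v'; rfl
  have hpy : ∀ k, p k • y k = a k := by
    intro k
    rw [hy, ha]
    show p k • ((ω k * K k m / p k) • ψ k) = _
    rw [smul_smul, mul_div_cancel₀ _ (hppos k).ne']
  have htot : (∑ g : Fin G, ∑ k ∈ univ.filter (fun k => grp k = g), p k • y k)
      = ∑ k, a k := by
    rw [Finset.sum_congr rfl fun (g : Fin G) _ =>
      Finset.sum_congr rfl fun k _ => hpy k]
    exact Finset.sum_fiberwise univ grp a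
  have hvar : ∀ g : Fin G,
      (∑ k ∈ univ.filter (fun k => grp k = g), p k * ‖y k‖ ^ 2)
        - ‖∑ k ∈ univ.filter (fun k => grp k = g), p k • y k‖ ^ 2
      = (1 / 2) * ∑ k ∈ univ.filter (fun k => grp k = g),
          ∑ k' ∈ univ.filter (fun k' => grp k' = g),
            ‖Real.sqrt (p k' / p k) • a k - Real.sqrt (p k / p k') • a k'‖ ^ 2 := by
    intro g
    rw [symm_var (univ.filter (fun k => grp k = g)) p (fun k _ => hppos k) (hps g) a]
    rw [Finset.sum_congr rfl fun k (_ : k ∈ univ.filter (fun k => grp k = g)) => hpy k]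
    congr 1
    refine Finset.sum_congr rfl fun k _ => ?_
    have h1 : ‖y k‖ ^ 2 = (ω k * K k m / p k) ^ 2 * ‖ψ k‖ ^ 2 := by
      rw [hy]
      show ‖(ω k * K k m / p k) • ψ k‖ ^ 2 = _
      rw [norm_smul, mul_pow, Real.norm_eq_abs, sq_abs]
    have h2 : ‖a k‖ ^ 2 = (ω k * K k m) ^ 2 * ‖ψ k‖ ^ 2 := by
      rw [ha]
      show ‖(ω k * K k m) • ψ k‖ ^ 2 = _
      rw [norm_smul, mul_pow, Real.norm_eq_abs, sq_abs]
    rw [h1, h2]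
    have := (hppos k).ne'
    field_simp
  rw [Finset.sum_congr rfl fun (v' : Sel grp) _ => by rw [hstep v'],
    sel_expect_norm_sq p hps y c, htot,
    Finset.sum_congr rfl fun (g : Fin G) _ => hvar g, ← Finset.mul_sum]
  simp only [hp, ha, hψ, mul_smul]

end Lemmas

/-- Theorem 2.2 (uniform-in-`n` boundedness of the variance of RSI), for the
abstract RSI chain: under the normalization assumptions on `ω, K`, the sweep
bound `‖A_m x‖ ≤ λ‖x‖` with `λ ∈ [0,1)`, and the bound `M` on the symmetrized
second-moment terms, the weighted variance of the RSI iterates about the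
source-iteration iterates satisfies
`Σ_m ω m E_{μ_n}‖Φ_m − φ^{(n)}_m‖² ≤ λ^{2n} V₀ + ((1−λ^{2n})/(1−λ²)) M`. -/
theorem rsi_variance_uniformly_bounded
    (grp : V → Fin G) (hgrp : ∀ g : Fin G, ∃ k, grp k = g)
    (ω : V → ℝ) (hω : ∀ k, 0 < ω k)
    (K : V → V → ℝ) (hK : ∀ k m, 0 < K k m)
    (hK1 : ∀ m, ∑ k, ω k * K k m = 1)
    (hK2 : ∀ k, ∑ m, ω m * K k m = 1)
    (hω1 : ∑ m, ω m = 1)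
    (lam : ℝ) (hlam0 : 0 ≤ lam) (hlam1 : lam < 1)
    (A : V → H →L[ℝ] H) (hA : ∀ m x, ‖A m x‖ ≤ lam * ‖x‖)
    (b : V → H) (ψ0 : V → H)
    (M : ℝ) (hM0 : 0 ≤ M)
    (hM : ∀ (n : ℕ) (m : V),
      En grp ω K A b ψ0 n (fun s =>
        (1 / 2) * ∑ g : Fin G,
          ∑ k ∈ univ.filter (fun k => grp k = g),
            ∑ k' ∈ univ.filter (fun k' => grp k' = g),
              ‖(Real.sqrt (pf grp ω K s.1 k' / pf grp ω K s.1 k) *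
                  (ω k * K k m)) • (A k (s.2 k) + b k)
                - (Real.sqrt (pf grp ω K s.1 k / pf grp ω K s.1 k') *
                  (ω k' * K k' m)) • (A k' (s.2 k') + b k')‖ ^ 2) ≤ M)
    (n : ℕ) :
    ∑ m, ω m *
        En grp ω K A b ψ0 n (fun s =>
          ‖s.2 m - phiSI ω K A b (fun m' => ∑ k, (ω k * K k m') • ψ0 k) n m‖ ^ 2)
      ≤ lam ^ (2 * n) *
          (∑ m, ω m *
            En grp ω K A b ψ0 0 (fun s =>
              ‖s.2 m - (∑ k, (ω k * K k m) • ψ0 k)‖ ^ 2))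
        + ((1 - lam ^ (2 * n)) / (1 - lam ^ 2)) * M := by
  have hVne : Nonempty V := by
    rcases isEmpty_or_nonempty V with hE | hN
    · exact absurd hω1 (by simp)
    · exact hN
  haveI hGne : Nonempty (Fin G) := ⟨grp (Classical.arbitrary V)⟩
  have key : ∀ N : ℕ,
      ∑ m, ω m * En grp ω K A b ψ0 (N + 1) (fun s => ‖s.2 m - phiSI ω K A b (fun m' => ∑ k, (ω k * K k m') • ψ0 k) (N + 1) m‖ ^ 2)
        ≤ lam ^ 2 * (∑ m, ω m * En grp ω K A b ψ0 N (fun s => ‖s.2 m - phiSI ω K A b (fun m' => ∑ k, (ω k * K k m') • ψ0 k) N m‖ ^ 2)) + M := by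
    intro N
    have hbias : ∀ m : V, ∀ s' : Sel grp × (V → H),
        ‖(∑ k, (ω k * K k m) • (A k (s'.2 k) + b k))
            - phiSI ω K A b (fun m' => ∑ k, (ω k * K k m') • ψ0 k) (N + 1) m‖ ^ 2
          ≤ ∑ k, ((ω k * K k m) * lam ^ 2) *
              ‖s'.2 k - phiSI ω K A b (fun m' => ∑ k, (ω k * K k m') • ψ0 k) N k‖ ^ 2 := by
      intro m s'
      have hphi : phiSI ω K A b (fun m' => ∑ k, (ω k * K k m') • ψ0 k) (N + 1) m
          = ∑ k, (ω k * K k m) • (A k (phiSI ω K A b (fun m' => ∑ k, (ω k * K k m') • ψ0 k) N k) + b k) := rfl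
      rw [hphi, ← Finset.sum_sub_distrib]
      have hterm : ∀ k : V, (ω k * K k m) • (A k (s'.2 k) + b k)
            - (ω k * K k m) • (A k (phiSI ω K A b (fun m' => ∑ k, (ω k * K k m') • ψ0 k) N k) + b k)
          = (ω k * K k m) • (A k (s'.2 k - phiSI ω K A b (fun m' => ∑ k, (ω k * K k m') • ψ0 k) N k)) := by
        intro k
        rw [← smul_sub]
        congr 1
        rw [map_sub]
        abel
      rw [Finset.sum_congr rfl fun k _ => hterm k]
      refine (jensen_norm_sq univ (fun k => ω k * K k m)
        (fun k _ => (mul_pos (hω k) (hK k m)).le) (hK1 m) _).trans ?_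
      refine Finset.sum_le_sum fun k _ => ?_
      have h1 : ‖A k (s'.2 k - phiSI ω K A b (fun m' => ∑ k, (ω k * K k m') • ψ0 k) N k)‖ ^ 2
          ≤ lam ^ 2 * ‖s'.2 k - phiSI ω K A b (fun m' => ∑ k, (ω k * K k m') • ψ0 k) N k‖ ^ 2 := by
        have h2 := pow_le_pow_left₀ (norm_nonneg _)
          (hA k (s'.2 k - phiSI ω K A b (fun m' => ∑ k, (ω k * K k m') • ψ0 k) N k)) 2
        calc ‖A k (s'.2 k - phiSI ω K A b (fun m' => ∑ k, (ω k * K k m') • ψ0 k) N k)‖ ^ 2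
            ≤ (lam * ‖s'.2 k - phiSI ω K A b (fun m' => ∑ k, (ω k * K k m') • ψ0 k) N k‖) ^ 2 := h2
          _ = lam ^ 2 * ‖s'.2 k - phiSI ω K A b (fun m' => ∑ k, (ω k * K k m') • ψ0 k) N k‖ ^ 2 := by ring
      calc (ω k * K k m) * ‖A k (s'.2 k - phiSI ω K A b (fun m' => ∑ k, (ω k * K k m') • ψ0 k) N k)‖ ^ 2
          ≤ (ω k * K k m) * (lam ^ 2 * ‖s'.2 k - phiSI ω K A b (fun m' => ∑ k, (ω k * K k m') • ψ0 k) N k‖ ^ 2) :=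
            mul_le_mul_of_nonneg_left h1 (mul_pos (hω k) (hK k m)).le
        _ = ((ω k * K k m) * lam ^ 2) * ‖s'.2 k - phiSI ω K A b (fun m' => ∑ k, (ω k * K k m') • ψ0 k) N k‖ ^ 2 := by
            ring
    calc ∑ m, ω m * En grp ω K A b ψ0 (N + 1) (fun s => ‖s.2 m - phiSI ω K A b (fun m' => ∑ k, (ω k * K k m') • ψ0 k) (N + 1) m‖ ^ 2)
        = ∑ m, ω m * (En grp ω K A b ψ0 N (fun s =>
        (1 / 2) * ∑ g : Fin G,
          ∑ k ∈ univ.filter (fun k => grp k = g),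
            ∑ k' ∈ univ.filter (fun k' => grp k' = g),
              ‖(Real.sqrt (pf grp ω K s.1 k' / pf grp ω K s.1 k) *
                  (ω k * K k m)) • (A k (s.2 k) + b k)
                - (Real.sqrt (pf grp ω K s.1 k / pf grp ω K s.1 k') *
                  (ω k' * K k' m)) • (A k' (s.2 k') + b k')‖ ^ 2)
            + En grp ω K A b ψ0 N (fun s => ‖(∑ k, (ω k * K k m) • (A k (s.2 k) + b k)) - phiSI ω K A b (fun m' => ∑ k, (ω k * K k m') • ψ0 k) (N + 1) m‖ ^ 2)) := by
          refine Finset.sum_congr rfl fun m _ => ?_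
          have e1 : En grp ω K A b ψ0 (N + 1) (fun s => ‖s.2 m - phiSI ω K A b (fun m' => ∑ k, (ω k * K k m') • ψ0 k) (N + 1) m‖ ^ 2)
              = En grp ω K A b ψ0 N (fun s' =>
                  ((1 / 2) * ∑ g : Fin G,
                    ∑ k ∈ univ.filter (fun k => grp k = g),
                      ∑ k' ∈ univ.filter (fun k' => grp k' = g),
                        ‖(Real.sqrt (pf grp ω K s'.1 k' / pf grp ω K s'.1 k) *
                            (ω k * K k m)) • (A k (s'.2 k) + b k)
                          - (Real.sqrt (pf grp ω K s'.1 k / pf grp ω K s'.1 k') *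
                            (ω k' * K k' m)) • (A k' (s'.2 k') + b k')‖ ^ 2)
                  + ‖(∑ k, (ω k * K k m) • (A k (s'.2 k) + b k))
                      - phiSI ω K A b (fun m' => ∑ k, (ω k * K k m') • ψ0 k) (N + 1) m‖ ^ 2) := by
            rw [En_succ]
            congr 1
            funext s'
            exact step_expect hω hK hgrp s' m (phiSI ω K A b (fun m' => ∑ k, (ω k * K k m') • ψ0 k) (N + 1) m)
          rw [e1.trans (En_add N (fun s =>
        (1 / 2) * ∑ g : Fin G,
          ∑ k ∈ univ.filter (fun k => grp k = g),
            ∑ k' ∈ univ.filter (fun k' => grp k' = g),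
              ‖(Real.sqrt (pf grp ω K s.1 k' / pf grp ω K s.1 k) *
                  (ω k * K k m)) • (A k (s.2 k) + b k)
                - (Real.sqrt (pf grp ω K s.1 k / pf grp ω K s.1 k') *
                  (ω k' * K k' m)) • (A k' (s.2 k') + b k')‖ ^ 2) (fun s => ‖(∑ k, (ω k * K k m) • (A k (s.2 k) + b k)) - phiSI ω K A b (fun m' => ∑ k, (ω k * K k m') • ψ0 k) (N + 1) m‖ ^ 2))]
      _ ≤ ∑ m, ω m * (M + ∑ k, ((ω k * K k m) * lam ^ 2) * En grp ω K A b ψ0 N (fun s => ‖s.2 k - phiSI ω K A b (fun m' => ∑ k, (ω k * K k m') • ψ0 k) N k‖ ^ 2)) := by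
          refine Finset.sum_le_sum fun m _ => ?_
          refine mul_le_mul_of_nonneg_left (add_le_add (hM N m) ?_) (hω m).le
          have hmono := En_mono (A := A) (b := b) (ψ0 := ψ0) hω hK N (hbias m)
          refine hmono.trans (le_of_eq ?_)
          rw [En_fsum univ N (fun k s => ((ω k * K k m) * lam ^ 2) *
            ‖s.2 k - phiSI ω K A b (fun m' => ∑ k, (ω k * K k m') • ψ0 k) N k‖ ^ 2)]
          exact Finset.sum_congr rfl fun k _ => En_smul ((ω k * K k m) * lam ^ 2) N _
      _ = lam ^ 2 * (∑ m, ω m * En grp ω K A b ψ0 N (fun s => ‖s.2 m - phiSI ω K A b (fun m' => ∑ k, (ω k * K k m') • ψ0 k) N m‖ ^ 2)) + M := by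
          have expand : ∀ m : V, ω m * (M + ∑ k, ((ω k * K k m) * lam ^ 2) * En grp ω K A b ψ0 N (fun s => ‖s.2 k - phiSI ω K A b (fun m' => ∑ k, (ω k * K k m') • ψ0 k) N k‖ ^ 2))
              = ω m * M + ∑ k, ω m * (((ω k * K k m) * lam ^ 2) * En grp ω K A b ψ0 N (fun s => ‖s.2 k - phiSI ω K A b (fun m' => ∑ k, (ω k * K k m') • ψ0 k) N k‖ ^ 2)) := by
            intro m
            rw [mul_add, Finset.mul_sum]
          rw [Finset.sum_congr rfl fun m _ => expand m, Finset.sum_add_distrib,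
            ← Finset.sum_mul, hω1, one_mul, Finset.sum_comm]
          have per_k : ∀ k : V, ∑ m, ω m * (((ω k * K k m) * lam ^ 2) * En grp ω K A b ψ0 N (fun s => ‖s.2 k - phiSI ω K A b (fun m' => ∑ k, (ω k * K k m') • ψ0 k) N k‖ ^ 2))
              = lam ^ 2 * (ω k * En grp ω K A b ψ0 N (fun s => ‖s.2 k - phiSI ω K A b (fun m' => ∑ k, (ω k * K k m') • ψ0 k) N k‖ ^ 2)) := by
            intro k
            rw [Finset.sum_congr rfl fun m _ =>
              (show ω m * (((ω k * K k m) * lam ^ 2) * En grp ω K A b ψ0 N (fun s => ‖s.2 k - phiSI ω K A b (fun m' => ∑ k, (ω k * K k m') • ψ0 k) N k‖ ^ 2))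
                = (ω m * K k m) * ((ω k * lam ^ 2) * En grp ω K A b ψ0 N (fun s => ‖s.2 k - phiSI ω K A b (fun m' => ∑ k, (ω k * K k m') • ψ0 k) N k‖ ^ 2)) by ring),
              ← Finset.sum_mul, hK2 k, one_mul]
            ring
          rw [Finset.sum_congr rfl fun k _ => per_k k, ← Finset.mul_sum]
          ring
  induction n with
  | zero =>
    simp only [Nat.mul_zero, pow_zero, one_mul, sub_self, zero_div, zero_mul, add_zero]
    exact le_of_eq (Finset.sum_congr rfl fun m _ => rfl)
  | succ N ih =>
    refine (key N).trans ?_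
    refine (add_le_add (mul_le_mul_of_nonneg_left ih (by positivity : (0:ℝ) ≤ lam ^ 2)) le_rfl).trans
      (le_of_eq ?_)
    have hlt : lam ^ 2 < 1 := by nlinarith
    have hne : (1 : ℝ) - lam ^ 2 ≠ 0 := (sub_pos.mpr hlt).ne'
    rw [Nat.mul_succ, pow_add]
    field_simp
    ring

end RSI11
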